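/- For every countably infinite locally finite group G, there exists a family 𝔉 of subsets of G with |𝔉| = 2^ℵ₀ such that any two distinct members of 𝔉 are not coarsely equivalent as subsets of G. -/

import Mathlib

open Pointwise

/-- The ball `B_X(x, F) = ((F·x) ∪ {x}) ∩ X` in a subset `X` of a group `G`. -/
def ballIn {G : Type*} [Group G] (X : Set G) (F : Finset G) (x : G) : Set G :=
  ((F : Set G) * {x} ∪ {x}) ∩ X

/-- A bijection `f : X ≃ X'` between subsets of a group `G` is an asymorphism if
it is coarse in both directions. -/
def IsAsymorphism {G : Type*} [Group G] (X X' : Set G) (f : X ≃ X') : Prop :=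
  (∀ F : Finset G, ∃ F' : Finset G, ∀ x y : X,
      (y : G) ∈ (F : Set G) * {(x : G)} ∪ {(x : G)} →
      (f y : G) ∈ (F' : Set G) * {(f x : G)} ∪ {(f x : G)}) ∧
  (∀ F : Finset G, ∃ F' : Finset G, ∀ x y : X',
      (y : G) ∈ (F : Set G) * {(x : G)} ∪ {(x : G)} →
      (f.symm y : G) ∈ (F' : Set G) * {(f.symm x : G)} ∪ {(f.symm x : G)})

/-- `Y` is a large subset of `X` (subsets of a group `G`). -/
def LargeIn {G : Type*} [Group G] (Y X : Set G) : Prop :=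
  Y ⊆ X ∧ ∃ F : Finset G, X ⊆ (F : Set G) * Y ∪ Y

/-- Subsets `X, X'` of a group `G` are coarsely equivalent if some large subsets
of each are asymorphic. -/
def CoarselyEquiv {G : Type*} [Group G] (X X' : Set G) : Prop :=
  ∃ Y Y' : Set G, LargeIn Y X ∧ LargeIn Y' X' ∧ ∃ f : Y ≃ Y', IsAsymorphism Y Y' f

/-!
Choose an exhausting chain of finite subgroups `H n` of `G` with `n ! * |H n| < |H (n + 1)|`.
For every pair `(i, l)` put a clump of `i !` points in the annulus `H (n + 1) \ H n`,
`n = clumpLevel i l`, such that two distinct points `z, w` of the clump have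
`z * w⁻¹ ∈ H (i + 1) \ H i`. For `T ⊆ ℕ` let `X_T` be the union of the clumps `(i, l)`, `i ∈ T`.

In a subset `Y` of `X_T`, a ball component at a scale between `H (i + 1)` and the level of its
clump is the trace of the clump on `Y`, while finer scales split it into points. Call `v` a
stable component size of `Y` if infinitely many components have size `v` and stop growing beyond
some scale; asymorphisms preserve this. If `Y` is `F`-large in `X_T`, it keeps at least a
`1 / (|F| + 1)` part of every clump of high level, so each `i ∈ T` yields a stable size within
a factor `|F| + 1` of `i !`, and every stable size `≥ 2` is of this kind. As `(i + 1) ! / i !`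
is unbounded, a coarse equivalence of `X_T` and `X_S` forces `T \ S` to be finite; an almost
disjoint family of `2 ^ ℵ₀` sets `T` gives the theorem.
-/

section

open Set Function
open scoped Nat

variable {G : Type*} [Group G]

lemma mem_ballIn {Z : Set G} {F : Finset G} {x y : G} :
    y ∈ ballIn Z F x ↔ y ∈ Z ∧ (y = x ∨ y * x⁻¹ ∈ F) := by
  simp [ballIn, Set.mul_singleton, and_comm]

lemma ballIn_mono {Z : Set G} {F F' : Finset G} (h : F ⊆ F') (x : G) :
    ballIn Z F x ⊆ ballIn Z F' x :=
  inter_subset_inter_left _ (union_subset_union_left _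
    (Set.mul_subset_mul_right (Finset.coe_subset.2 h)))

lemma CoarselyEquiv.refl (X : Set G) : CoarselyEquiv X X :=
  ⟨X, X, ⟨subset_rfl, ∅, subset_union_right⟩, ⟨subset_rfl, ∅, subset_union_right⟩,
    Equiv.refl X, fun F => ⟨F, fun _ _ h => h⟩, fun F => ⟨F, fun _ _ h => h⟩⟩

def IsBallClosed (Z : Set G) (F : Finset G) (C : Set G) : Prop :=
  ∀ x ∈ C, ballIn Z F x ⊆ C

/-- The points reachable from `x` by chains of steps `y ∈ ballIn Z F x`. -/
def ballComponent (Z : Set G) (F : Finset G) (x : G) : Set G :=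
  ⋂₀ {C | IsBallClosed Z F C ∧ x ∈ C}

section BallComponent

variable {Z C : Set G} {F F' : Finset G} {x : G}

lemma mem_ballComponent_self : x ∈ ballComponent Z F x :=
  mem_sInter.2 fun _ hC => hC.2

lemma ballComponent_subset_of_isBallClosed (hC : IsBallClosed Z F C) (hx : x ∈ C) :
    ballComponent Z F x ⊆ C :=
  sInter_subset_of_mem ⟨hC, hx⟩

lemma isBallClosed_ballComponent : IsBallClosed Z F (ballComponent Z F x) :=
  fun _ hy _ hz => mem_sInter.2 fun _ hC => hC.1 _ (mem_sInter.1 hy _ hC) hz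

lemma ballComponent_subset (hx : x ∈ Z) : ballComponent Z F x ⊆ Z :=
  ballComponent_subset_of_isBallClosed (fun _ _ => inter_subset_right) hx

lemma ballComponent_mono (h : F ⊆ F') : ballComponent Z F x ⊆ ballComponent Z F' x :=
  ballComponent_subset_of_isBallClosed
    (fun _ hy _ hz => isBallClosed_ballComponent _ hy (ballIn_mono h _ hz))
    mem_ballComponent_self

lemma image_ballComponent_subset {Y Y' : Set G} {g : G → G}
    (hg : ∀ a ∈ Y, MapsTo g (ballIn Y F a) (ballIn Y' F' (g a))) {a : G} (ha : a ∈ Y) :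
    g '' ballComponent Y F a ⊆ ballComponent Y' F' (g a) := by
  refine image_subset_iff.2 ((ballComponent_subset_of_isBallClosed (C := Y ∩ g ⁻¹' _) ?_
    ⟨ha, mem_ballComponent_self⟩).trans inter_subset_right)
  rintro b ⟨hbY, hb⟩ c hc
  exact ⟨hc.2, isBallClosed_ballComponent _ hb (hg b hbY hc)⟩

end BallComponent

def IsStableComponentSize (Z : Set G) (v : ℕ) : Prop :=
  ∃ F₁ : Finset G, ∀ F₂ : Finset G, F₁ ⊆ F₂ →
    {a ∈ Z | ballComponent Z F₁ a = ballComponent Z F₂ a ∧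
      (ballComponent Z F₂ a).encard = v}.Infinite

section Asymorphism

variable {Y Y' : Set G}

noncomputable def extendSubtype (f : Y → G) : G → G :=
  extend Subtype.val f 1

lemma extendSubtype_coe (f : Y → G) (y : Y) : extendSubtype f y = f y :=
  Subtype.val_injective.extend_apply _ _ _

lemma mapsTo_extendSubtype (f : Y ≃ Y') : MapsTo (extendSubtype fun y => (f y : G)) Y Y' := by
  intro a ha
  lift a to Y using ha
  simp [extendSubtype_coe]

lemma leftInvOn_extendSubtype (f : Y ≃ Y') :
    LeftInvOn (extendSubtype fun y => (f.symm y : G)) (extendSubtype fun y => (f y : G)) Y := by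
  intro a ha
  lift a to Y using ha
  simp [extendSubtype_coe]

lemma mapsTo_ballIn_extendSubtype (f : Y ≃ Y') {F F' : Finset G}
    (hf : ∀ x y : Y, (y : G) ∈ (F : Set G) * {(x : G)} ∪ {(x : G)} →
      (f y : G) ∈ (F' : Set G) * {(f x : G)} ∪ {(f x : G)})
    {a : G} (ha : a ∈ Y) :
    MapsTo (extendSubtype fun y => (f y : G)) (ballIn Y F a)
      (ballIn Y' F' (extendSubtype (fun y => (f y : G)) a)) := by
  lift a to Y using ha
  rintro b ⟨hb, hbY⟩
  lift b to Y using hbY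
  simp only [extendSubtype_coe]
  exact ⟨hf a b hb, (f b).2⟩

theorem IsAsymorphism.isStableComponentSize {f : Y ≃ Y'} (hf : IsAsymorphism Y Y' f) {v : ℕ}
    (hv : IsStableComponentSize Y v) : IsStableComponentSize Y' v := by
  classical
  set g := extendSubtype fun y => (f y : G)
  set g' := extendSubtype fun y => (f.symm y : G)
  have hg : MapsTo g Y Y' := mapsTo_extendSubtype f
  have hg'g : LeftInvOn g' g Y := leftInvOn_extendSubtype f
  have hgg' : LeftInvOn g g' Y' := leftInvOn_extendSubtype f.symm
  obtain ⟨F₁, hF₁⟩ := hv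
  obtain ⟨F₁', hF₁'⟩ := hf.1 F₁
  refine ⟨F₁', fun F₂' hF₁₂' => ?_⟩
  obtain ⟨Ψ, hΨ⟩ := hf.2 F₂'
  -- `g` maps the stable `F₁`-component `C` of `a` into the `F₁'`-component of `g a`, and `g'`
  -- maps the `F₂'`-component of `g a` into the `(F₁ ∪ Ψ)`-component of `a`, which is `C` again.
  refine ((hF₁ (F₁ ∪ Ψ) Finset.subset_union_left).image
    (hg'g.injOn.mono fun a ha => ha.1)).mono ?_
  rintro _ ⟨a, ⟨ha, hstable, hcard⟩, rfl⟩
  have h₁ : g '' ballComponent Y F₁ a ⊆ ballComponent Y' F₁' (g a) :=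
    image_ballComponent_subset (fun _ hb => mapsTo_ballIn_extendSubtype f hF₁' hb) ha
  have h₂ : ballComponent Y' F₁' (g a) ⊆ ballComponent Y' F₂' (g a) :=
    ballComponent_mono hF₁₂'
  have h₃ : ballComponent Y' F₂' (g a) ⊆ g '' ballComponent Y F₁ a := by
    intro b hb
    have hb' : g' b ∈ ballComponent Y Ψ a := hg'g ha ▸
      image_ballComponent_subset (fun _ hc => mapsTo_ballIn_extendSubtype f.symm hΨ hc) (hg ha)
        ⟨b, hb, rfl⟩
    refine ⟨g' b, ?_, hgg' (ballComponent_subset (hg ha) hb)⟩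
    rw [hstable]
    exact ballComponent_mono Finset.subset_union_right hb'
  have hcomp₂ : ballComponent Y' F₂' (g a) = g '' ballComponent Y F₁ a :=
    h₃.antisymm (h₁.trans h₂)
  have hcomp₁ : ballComponent Y' F₁' (g a) = g '' ballComponent Y F₁ a :=
    (h₂.trans h₃).antisymm h₁
  refine ⟨hg ha, hcomp₁.trans hcomp₂.symm, ?_⟩
  rw [hcomp₂, (hg'g.injOn.mono (ballComponent_subset ha)).encard_image, hstable, hcard]

end Asymorphism

lemma exists_infinite_fiber_of_le {f : ℕ → ℕ} {N : ℕ} (hf : ∀ l, f l ≤ N) :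
    ∃ v, {l | f l = v}.Infinite := by
  by_contra! h
  refine infinite_univ (((finite_Iic N).biUnion fun v _ => h v).subset fun l _ => ?_)
  exact mem_biUnion (hf l) rfl

lemma eq_of_factorial_le_mul {i j v c c' : ℕ} (hi : c + c' < i) (hvi : v ≤ i !)
    (hiv : i ! ≤ c * v) (hvj : v ≤ j !) (hjv : j ! ≤ c' * v) : j = i := by
  rcases lt_trichotomy j i with hji | rfl | hij
  · obtain ⟨k, rfl⟩ : ∃ k, i = k + 1 := ⟨i - 1, by omega⟩
    have : (k + 1) * k ! ≤ c * k ! := calc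
      (k + 1) * k ! = (k + 1) ! := (Nat.factorial_succ k).symm
      _ ≤ c * v := hiv
      _ ≤ c * j ! := Nat.mul_le_mul_left c hvj
      _ ≤ c * k ! := Nat.mul_le_mul_left c (Nat.factorial_le (by omega))
    have := Nat.le_of_mul_le_mul_right this (Nat.factorial_pos k)
    omega
  · rfl
  · have : (i + 1) * i ! ≤ c' * i ! := calc
      (i + 1) * i ! = (i + 1) ! := (Nat.factorial_succ i).symm
      _ ≤ j ! := Nat.factorial_le hij
      _ ≤ c' * v := hjv
      _ ≤ c' * i ! := Nat.mul_le_mul_left c' hvi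
    have := Nat.le_of_mul_le_mul_right this (Nat.factorial_pos i)
    omega

/-- `H n` is generated by the first `chainBound e m n` values of `e`; the next bound exceeds
`m n * |H n|`, which forces the growth of the chain. -/
noncomputable def chainBound (e : ℕ → G) (m : ℕ → ℕ) : ℕ → ℕ
  | 0 => 0
  | n + 1 => chainBound e m n + 1 +
      m n * Nat.card (Subgroup.closure (e '' Iio (chainBound e m n)))

lemma exists_subgroup_chain [Countable G] [Infinite G]
    (hlf : ∀ s : Set G, s.Finite → (Subgroup.closure s : Set G).Finite) (m : ℕ → ℕ) :
    ∃ H : ℕ → Subgroup G, Monotone H ∧ (∀ n, (H n : Set G).Finite) ∧ (∀ g, ∃ n, g ∈ H n) ∧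
      ∀ n, m n * Nat.card (H n) < Nat.card (H (n + 1)) := by
  obtain ⟨e⟩ : Nonempty (ℕ ≃ G) := nonempty_equiv_of_countable
  set N := chainBound e m
  have hN : StrictMono N := strictMono_nat_of_lt_succ fun n => by
    simp only [N, chainBound]
    omega
  have hfin : ∀ n, (Subgroup.closure (e '' Iio (N n)) : Set G).Finite := fun n =>
    hlf _ ((finite_Iio _).image e)
  have hcard : ∀ n, N n ≤ Nat.card (Subgroup.closure (e '' Iio (N n))) := fun n => calc
    N n = (e '' Iio (N n)).ncard := by rw [ncard_image_of_injective _ e.injective, ncard_Iio_nat]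
    _ ≤ _ := ncard_le_ncard Subgroup.subset_closure (hfin n)
  refine ⟨fun n => Subgroup.closure (e '' Iio (N n)),
    fun a b h => Subgroup.closure_mono (image_mono (Iio_subset_Iio (hN.monotone h))), hfin,
    fun g => ⟨e.symm g + 1, Subgroup.subset_closure ⟨e.symm g, ?_, e.apply_symm_apply g⟩⟩,
    fun n => lt_of_lt_of_le ?_ (hcard (n + 1))⟩
  · exact Nat.lt_of_succ_le (hN.id_le _)
  · simp only [N, chainBound]
    omega

lemma exists_distinct_right_cosets {H K : Subgroup G} (hHK : H ≤ K) [Finite K] {m : ℕ}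
    (hm : m * Nat.card H ≤ Nat.card K) :
    ∃ c : Fin m → G, (∀ j, c j ∈ K) ∧ ∀ j k, c j * (c k)⁻¹ ∈ H → j = k := by
  have : Finite H := Finite.of_injective _ (Subgroup.inclusion_injective hHK)
  set Q := K ⧸ H.subgroupOf K
  have hmQ : m ≤ Nat.card Q := by
    have hK := (H.subgroupOf K).card_mul_index
    rw [Nat.card_congr (Subgroup.subgroupOfEquivOfLe hHK).toEquiv, Subgroup.index] at hK
    exact Nat.le_of_mul_le_mul_left (hK ▸ mul_comm m _ ▸ hm) Nat.card_pos
  let q : Fin m → Q := fun j => (Finite.equivFin Q).symm (Fin.castLE hmQ j)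
  refine ⟨fun j => ((q j).out : G)⁻¹, fun j => K.inv_mem (q j).out.2, fun j k h => ?_⟩
  have hq : q j = q k := by
    rw [← (q j).out_eq, ← (q k).out_eq]
    exact QuotientGroup.eq.2 (by simpa [Subgroup.mem_subgroupOf] using h)
  simpa [q, Fin.castLE_inj] using hq

def clumpLevel (i l : ℕ) : ℕ := Nat.pair i l + 1

lemma le_clumpLevel (i l : ℕ) : i + 1 ≤ clumpLevel i l :=
  Nat.succ_le_succ (Nat.left_le_pair i l)

lemma lt_clumpLevel (i l : ℕ) : l < clumpLevel i l :=
  Nat.lt_succ_of_le (Nat.right_le_pair i l)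

lemma clumpLevel_injective {i l i' l' : ℕ} (h : clumpLevel i l = clumpLevel i' l') :
    (i, l) = (i', l') := by
  obtain ⟨rfl, rfl⟩ := Nat.pair_eq_pair.1 (Nat.succ_injective h)
  rfl

structure ClumpedChain (G : Type*) [Group G] where
  H : ℕ → Subgroup G
  finite_H (n : ℕ) : (H n : Set G).Finite
  monotone_H : Monotone H
  exists_mem_H (g : G) : ∃ n, g ∈ H n
  clump : ℕ → ℕ → Set G
  clump_subset (i l : ℕ) : clump i l ⊆ (H (clumpLevel i l + 1) : Set G) \ H (clumpLevel i l)
  mul_inv_mem {i l : ℕ} {z w : G} : z ∈ clump i l → w ∈ clump i l → z * w⁻¹ ∈ H (i + 1)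
  eq_of_mul_inv_mem {i l : ℕ} {z w : G} : z ∈ clump i l → w ∈ clump i l → z * w⁻¹ ∈ H i → z = w
  ncard_clump (i l : ℕ) : (clump i l).ncard = i !

theorem ClumpedChain.nonempty [Countable G] [Infinite G]
    (hlf : ∀ s : Set G, s.Finite → (Subgroup.closure s : Set G).Finite) :
    Nonempty (ClumpedChain G) := by
  obtain ⟨H, hmono, hfin, hexh, hgrowth⟩ := exists_subgroup_chain hlf Nat.factorial
  have hreps : ∀ i, ∃ c : Fin i ! → G, (∀ j, c j ∈ H (i + 1)) ∧
      ∀ j k, c j * (c k)⁻¹ ∈ H i → j = k := fun i =>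
    have := (hfin (i + 1)).to_subtype
    exists_distinct_right_cosets (hmono i.le_succ) (hgrowth i).le
  choose c hcH hc using hreps
  have hann : ∀ n, ∃ a ∈ H (n + 1), a ∉ H n := fun n => by
    refine SetLike.exists_of_lt (lt_of_le_of_ne (hmono n.le_succ) fun h => ?_)
    have := hgrowth n
    rw [← h] at this
    exact this.not_ge (Nat.le_mul_of_pos_left _ n.factorial_pos)
  choose a haH ha using hann
  have hcl : ∀ i l j, c i j ∈ H (clumpLevel i l) := fun i l j =>
    hmono (le_clumpLevel i l) (hcH i j)
  have hquot : ∀ i j k (x : G), c i j * x * (c i k * x)⁻¹ = c i j * (c i k)⁻¹ := by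
    intros; group
  refine ⟨⟨H, hfin, hmono, hexh, fun i l => (· * a (clumpLevel i l)) '' range (c i),
    ?_, ?_, ?_, ?_⟩⟩
  · rintro i l _ ⟨_, ⟨j, rfl⟩, rfl⟩
    exact ⟨mul_mem (hmono (Nat.le_succ _) (hcl i l j)) (haH _),
      fun h => ha _ (by simpa using mul_mem (inv_mem (hcl i l j)) h)⟩
  · rintro i l _ _ ⟨_, ⟨j, rfl⟩, rfl⟩ ⟨_, ⟨k, rfl⟩, rfl⟩
    rw [hquot]
    exact mul_mem (hcH i j) (inv_mem (hcH i k))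
  · rintro i l _ _ ⟨_, ⟨j, rfl⟩, rfl⟩ ⟨_, ⟨k, rfl⟩, rfl⟩ h
    rw [hquot] at h
    rw [hc i j k h]
  · intro i l
    have hinj : Injective (c i) := fun j k h =>
      hc i j k (by rw [h, mul_inv_cancel]; exact one_mem _)
    rw [ncard_image_of_injective _ (mul_left_injective _), ncard_range_of_injective hinj,
      Nat.card_fin]

namespace ClumpedChain

variable (S : ClumpedChain G)

def carrier (T : Set ℕ) : Set G :=
  ⋃ i ∈ T, ⋃ l, S.clump i l

lemma exists_subset_H {s : Set G} (hs : s.Finite) : ∃ K, s ⊆ S.H K := by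
  choose n hn using S.exists_mem_H
  obtain ⟨K, hK⟩ := (hs.image n).bddAbove
  exact ⟨K, fun g hg => S.monotone_H (hK ⟨g, hg, rfl⟩) (hn g)⟩

lemma infinite_iff_forall_exists_notMem {s : Set G} :
    s.Infinite ↔ ∀ K, ∃ a ∈ s, a ∉ S.H K := by
  refine ⟨fun hs K => not_subset.1 fun h => hs ((S.finite_H K).subset h), fun h hs => ?_⟩
  obtain ⟨K, hK⟩ := S.exists_subset_H hs
  obtain ⟨a, ha, haK⟩ := h K
  exact haK (hK ha)

lemma finite_clump (i l : ℕ) : (S.clump i l).Finite :=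
  finite_of_ncard_pos (S.ncard_clump i l ▸ i.factorial_pos)

variable {S} {T : Set ℕ} {Y Z : Set G} {F : Finset G} {i l : ℕ} {x z w : G}

lemma mem_carrier : z ∈ S.carrier T ↔ ∃ i ∈ T, ∃ l, z ∈ S.clump i l := by
  simp [carrier]

lemma coe_H_subset {a b : ℕ} (h : a ≤ b) : (S.H a : Set G) ⊆ S.H b :=
  S.monotone_H h

lemma pair_eq_of_mul_inv_mem {i' l' : ℕ} (hz : z ∈ S.clump i l) (hw : w ∈ S.clump i' l')
    (h : w * z⁻¹ ∈ S.H (clumpLevel i l)) : (i', l') = (i, l) := by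
  by_contra hne
  have hz' := S.clump_subset i l hz
  have hw' := S.clump_subset i' l' hw
  rcases lt_or_gt_of_ne (mt clumpLevel_injective hne) with hlt | hlt
  · refine hz'.2 ?_
    simpa using mul_mem (inv_mem h) (S.monotone_H (Nat.succ_le_of_lt hlt) hw'.1)
  · refine hw'.2 ?_
    simpa using mul_mem (S.monotone_H hlt.le h) (S.monotone_H (Nat.succ_le_of_lt hlt) hz'.1)

lemma isBallClosed_inter_clump (hZ : Z ⊆ S.carrier T)
    (hF : (F : Set G) ⊆ S.H (clumpLevel i l)) : IsBallClosed Z F (Z ∩ S.clump i l) := by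
  rintro x ⟨-, hx⟩ y hy
  obtain ⟨hyZ, rfl | hyx⟩ := mem_ballIn.1 hy
  · exact ⟨hyZ, hx⟩
  obtain ⟨i', -, l', hy'⟩ := mem_carrier.1 (hZ hyZ)
  obtain ⟨rfl, rfl⟩ := Prod.mk.inj (S.pair_eq_of_mul_inv_mem hx hy' (hF hyx))
  exact ⟨hyZ, hy'⟩

lemma isBallClosed_singleton (hZ : Z ⊆ S.carrier T) (hx : x ∈ S.clump i l)
    (hF : (F : Set G) ⊆ S.H i) : IsBallClosed Z F {x} := by
  rintro _ rfl y hy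
  obtain ⟨hyZ, rfl | hyx⟩ := mem_ballIn.1 hy
  · rfl
  obtain ⟨i', -, l', hy'⟩ := mem_carrier.1 (hZ hyZ)
  have hlev : i ≤ clumpLevel i l := by have := le_clumpLevel i l; omega
  obtain ⟨rfl, rfl⟩ := Prod.mk.inj (S.pair_eq_of_mul_inv_mem hx hy' (coe_H_subset hlev (hF hyx)))
  exact S.eq_of_mul_inv_mem hy' hx (hF hyx)

lemma ballComponent_eq_inter_clump (hZ : Z ⊆ S.carrier T) (hx : x ∈ Z ∩ S.clump i l)
    (h₁ : (S.H (i + 1) : Set G) ⊆ F) (h₂ : (F : Set G) ⊆ S.H (clumpLevel i l)) :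
    ballComponent Z F x = Z ∩ S.clump i l := by
  refine (ballComponent_subset_of_isBallClosed (isBallClosed_inter_clump hZ h₂) hx).antisymm ?_
  rintro y ⟨hyZ, hy⟩
  exact isBallClosed_ballComponent x mem_ballComponent_self
    (mem_ballIn.2 ⟨hyZ, Or.inr (h₁ (S.mul_inv_mem hy hx.2))⟩)

lemma ballComponent_eq_singleton (hZ : Z ⊆ S.carrier T) (hx : x ∈ S.clump i l)
    (hF : (F : Set G) ⊆ S.H i) : ballComponent Z F x = {x} :=
  (ballComponent_subset_of_isBallClosed (isBallClosed_singleton hZ hx hF) rfl).antisymm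
    (singleton_subset_iff.2 mem_ballComponent_self)

lemma factorial_le_mul_ncard (hY : Y ⊆ S.carrier T) (hF : S.carrier T ⊆ F * Y ∪ Y)
    (hi : i ∈ T) (hFl : (F : Set G) ⊆ S.H (clumpLevel i l)) :
    i ! ≤ (F.card + 1) * (Y ∩ S.clump i l).ncard := by
  set D := Y ∩ S.clump i l
  have hD : D.Finite := (S.finite_clump i l).subset inter_subset_right
  have hcover : S.clump i l ⊆ F * D ∪ D := by
    intro z hz
    rcases hF (mem_carrier.2 ⟨i, hi, l, hz⟩) with ⟨g, hg, y, hy, rfl⟩ | hzY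
    · obtain ⟨i', -, l', hy'⟩ := mem_carrier.1 (hY hy)
      obtain ⟨rfl, rfl⟩ :=
        Prod.mk.inj (S.pair_eq_of_mul_inv_mem hz hy' (by simpa using inv_mem (hFl hg)))
      exact Or.inl ⟨g, hg, y, ⟨hy, hy'⟩, rfl⟩
    · exact Or.inr ⟨hzY, hz⟩
  have hmul : ((F : Set G) * D).ncard ≤ F.card * D.ncard := by
    simpa using Set.natCard_mul_le (s := (F : Set G)) (t := D)
  calc i ! = (S.clump i l).ncard := (S.ncard_clump i l).symm
    _ ≤ (F * D ∪ D).ncard := ncard_le_ncard hcover ((F.finite_toSet.mul hD).union hD)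
    _ ≤ ((F : Set G) * D).ncard + D.ncard := ncard_union_le _ _
    _ ≤ (F.card + 1) * D.ncard := by rw [add_one_mul]; omega

theorem exists_isStableComponentSize (hY : Y ⊆ S.carrier T) (hF : S.carrier T ⊆ F * Y ∪ Y)
    (hi : i ∈ T) (hFi : F.card + 1 < i) :
    ∃ v, IsStableComponentSize Y v ∧ 2 ≤ v ∧ v ≤ i ! ∧ i ! ≤ (F.card + 1) * v := by
  have hle : ∀ l, (Y ∩ S.clump i l).ncard ≤ i ! := fun l =>
    S.ncard_clump i l ▸ ncard_le_ncard inter_subset_right (S.finite_clump i l)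
  obtain ⟨v, hv⟩ := exists_infinite_fiber_of_le hle
  obtain ⟨K₀, hK₀⟩ := S.exists_subset_H F.finite_toSet
  obtain ⟨l₀, hl₀ : (Y ∩ S.clump i l₀).ncard = v, hK₀l₀⟩ := hv.exists_gt K₀
  have hvi : v ≤ i ! := hl₀ ▸ hle l₀
  have hiv : i ! ≤ (F.card + 1) * v := hl₀ ▸ S.factorial_le_mul_ncard hY hF hi
    (hK₀.trans (coe_H_subset (hK₀l₀.trans (lt_clumpLevel i l₀)).le))
  have hv2 : 2 ≤ v := by
    by_contra! hv1
    have := Nat.self_le_factorial i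
    have := Nat.mul_le_mul_left (F.card + 1) (Nat.le_of_lt_succ hv1)
    omega
  have hH : ((S.finite_H (i + 1)).toFinset : Set G) = S.H (i + 1) := Finite.coe_toFinset _
  refine ⟨v, ⟨(S.finite_H (i + 1)).toFinset, fun F₂ hF₂ => ?_⟩, hv2, hvi, hiv⟩
  obtain ⟨K₁, hK₁⟩ := S.exists_subset_H F₂.finite_toSet
  refine (S.infinite_iff_forall_exists_notMem).2 fun K => ?_
  obtain ⟨l, hl : (Y ∩ S.clump i l).ncard = v, hKl⟩ := hv.exists_gt (K + K₁)
  have hlev : K + K₁ < clumpLevel i l := hKl.trans (lt_clumpLevel i l)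
  obtain ⟨a, ha⟩ : (Y ∩ S.clump i l).Nonempty := nonempty_of_ncard_ne_zero (by omega)
  have h₁ := ballComponent_eq_inter_clump hY ha hH.ge
    (hH.le.trans (coe_H_subset (le_clumpLevel i l)))
  have h₂ := ballComponent_eq_inter_clump hY ha (hH.ge.trans (Finset.coe_subset.2 hF₂))
    (hK₁.trans (coe_H_subset (by omega)))
  refine ⟨a, ⟨ha.1, h₁.trans h₂.symm, ?_⟩, fun haK => (S.clump_subset i l ha.2).2 ?_⟩
  · rw [h₂, ← ((S.finite_clump i l).subset inter_subset_right).cast_ncard_eq, hl]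
  · exact coe_H_subset (by omega) haK

theorem exists_mem_factorial_le_mul (hY : Y ⊆ S.carrier T) (hF : S.carrier T ⊆ F * Y ∪ Y)
    {v : ℕ} (hv : IsStableComponentSize Y v) (hv2 : 2 ≤ v) :
    ∃ j ∈ T, v ≤ j ! ∧ j ! ≤ (F.card + 1) * v := by
  obtain ⟨F₁, hF₁⟩ := hv
  obtain ⟨K₀, hK₀⟩ := S.exists_subset_H F.finite_toSet
  obtain ⟨K₁, hK₁⟩ := S.exists_subset_H F₁.finite_toSet
  set J := max K₀ K₁
  have hJ : ((S.finite_H J).toFinset : Set G) = S.H J := Finite.coe_toFinset _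
  have hF₁J : F₁ ⊆ (S.finite_H J).toFinset := by
    rw [← Finset.coe_subset, hJ]
    exact hK₁.trans (coe_H_subset (le_max_right _ _))
  obtain ⟨a, ⟨haY, -, hav⟩, haJ⟩ := (S.infinite_iff_forall_exists_notMem).1 (hF₁ _ hF₁J) J
  obtain ⟨j, hj, l, hal⟩ := mem_carrier.1 (hY haY)
  have hJl : J ≤ clumpLevel j l := by
    by_contra! h
    exact haJ (coe_H_subset (Nat.succ_le_of_lt h) (S.clump_subset j l hal).1)
  have hjJ : j + 1 ≤ J := by
    by_contra! h
    rw [ballComponent_eq_singleton hY hal (hJ.le.trans (coe_H_subset (by omega))),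
      encard_singleton] at hav
    have : v = 1 := by exact_mod_cast hav.symm
    omega
  have hcomp := ballComponent_eq_inter_clump hY ⟨haY, hal⟩ ((coe_H_subset hjJ).trans hJ.ge)
    (hJ.le.trans (coe_H_subset hJl))
  have hcard : (Y ∩ S.clump j l).ncard = v := by simp [← hcomp, ncard_def, hav]
  refine ⟨j, hj, ?_, ?_⟩
  · exact hcard ▸ S.ncard_clump j l ▸ ncard_le_ncard inter_subset_right (S.finite_clump j l)
  · exact hcard ▸ S.factorial_le_mul_ncard hY hF hj
      (hK₀.trans (coe_H_subset ((le_max_left _ _).trans hJl)))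

theorem not_coarselyEquiv_carrier {T T' : Set ℕ} (h : (T \ T').Infinite) :
    ¬ CoarselyEquiv (S.carrier T) (S.carrier T') := by
  rintro ⟨Y, Y', ⟨hY, F, hF⟩, ⟨hY', F', hF'⟩, f, hf⟩
  obtain ⟨i, ⟨hiT, hiT'⟩, hi⟩ := h.exists_gt (F.card + 1 + (F'.card + 1))
  obtain ⟨v, hv, hv2, hvi, hiv⟩ := exists_isStableComponentSize hY hF hiT (by omega)
  obtain ⟨j, hjT', hvj, hjv⟩ :=
    exists_mem_factorial_le_mul hY' hF' (hf.isStableComponentSize hv) hv2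
  exact hiT' (eq_of_factorial_le_mul hi hvi hiv hvj hjv ▸ hjT')

end ClumpedChain

open Classical in
noncomputable def prefixCode (r : Set ℕ) (n : ℕ) : ℕ :=
  Nat.pair n (Encodable.encode ((Finset.range n).filter (· ∈ r)))

lemma prefixCode_eq_prefixCode {r s : Set ℕ} {n n' : ℕ} (h : prefixCode r n = prefixCode s n') :
    n = n' ∧ ∀ k < n, (k ∈ r ↔ k ∈ s) := by
  obtain ⟨rfl, h⟩ := Nat.pair_eq_pair.1 h
  refine ⟨rfl, fun k hk => ?_⟩
  simpa [hk] using Finset.ext_iff.1 (Encodable.encode_injective h) k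

lemma prefixCode_injective (r : Set ℕ) : Injective (prefixCode r) :=
  fun _ _ h => (prefixCode_eq_prefixCode h).1

lemma infinite_range_prefixCode_diff {r s : Set ℕ} (h : r ≠ s) :
    (range (prefixCode r) \ range (prefixCode s)).Infinite := by
  obtain ⟨k, hk⟩ : ∃ k, ¬(k ∈ r ↔ k ∈ s) := by
    by_contra! h'
    exact h (Set.ext h')
  refine ((Ioi_infinite k).image (prefixCode_injective r).injOn).mono ?_
  rintro _ ⟨n, hn, rfl⟩
  exact ⟨mem_range_self n, fun ⟨n', hn'⟩ => hk ((prefixCode_eq_prefixCode hn'.symm).2 k hn)⟩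

end

/-- For every countably infinite locally finite group `G`, there are `2^ℵ₀` subsets of `G`
that are pairwise non-coarsely-equivalent. -/
theorem locally_finite_group_continuum_coarse_subsets
    (G : Type*) [Group G] [Countable G] [Infinite G]
    (hlf : ∀ S : Finset G, ((Subgroup.closure (S : Set G) : Subgroup G) : Set G).Finite) :
    ∃ 𝔉 : Set (Set G),
      Cardinal.mk 𝔉 = 2 ^ Cardinal.aleph0 ∧
      ∀ A ∈ 𝔉, ∀ B ∈ 𝔉, A ≠ B → ¬ CoarselyEquiv A B := by
  obtain ⟨S⟩ := ClumpedChain.nonempty fun s hs => by simpa using hlf hs.toFinset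
  set X : Set ℕ → Set G := fun r => S.carrier (Set.range (prefixCode r))
  have hX : ∀ r s, r ≠ s → ¬ CoarselyEquiv (X r) (X s) := fun r s h =>
    S.not_coarselyEquiv_carrier (infinite_range_prefixCode_diff h)
  have hXinj : Function.Injective X := fun r s h => by
    by_contra hrs
    exact hX r s hrs (h ▸ CoarselyEquiv.refl _)
  refine ⟨Set.range X, ?_, ?_⟩
  · simpa [Cardinal.mk_set] using Cardinal.mk_range_eq_of_injective hXinj
  · rintro _ ⟨r, rfl⟩ _ ⟨s, rfl⟩ hne
    exact hX r s (ne_of_apply_ne X hne)
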